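/- arXiv:1101.5282 — 3 statements merged into one kernel-verified Lean document; each statement's English description precedes it below -/
import Mathlib

section
/- Let L be a positive continuous uniformly integrable martingale on [0,T] with L_0 = 1, and let max L_T denote its running supremum over [0,T]. Then E[max L_T] - 1 = E[L_T ln(max L_T)], and consequently E[max L_T] - 1 ≥ E[L_T ln(L_T)]. -/
/-!
Fix a level `x > 1` and stop `L` at the first time `τ` it reaches `x`. Since `L` is continuous
and starts at `1 < x`, it equals `x` at time `τ` on `{S ≥ x}`, and optional sampling gives Doob's
maximal equality `E[L_T; S ≥ x] = x P(S ≥ x)`. By the layer-cake formula and Tonelli,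
`E[S - 1] = ∫_{t > 0} P(S ≥ 1 + t) dt = E[L_T ∫_0^{S-1} dt / (1 + t)] = E[L_T log S]`.
The inequality then follows from `L_T ≤ S`.
-/

open MeasureTheory Filter Set
open scoped Topology ENNReal

section SupIcc

variable {a b : ℝ}

lemma Continuous.bddAbove_range_Icc {f : ℝ → ℝ} (hf : Continuous f) :
    BddAbove (range fun t : Icc a b => f t) := by
  rw [← image_eq_range]
  exact (isCompact_Icc.image hf).bddAbove

lemma Continuous.le_iSup_Icc {f : ℝ → ℝ} (hf : Continuous f) {s : ℝ} (hs : s ∈ Icc a b) :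
    f s ≤ ⨆ t : Icc a b, f t :=
  le_ciSup hf.bddAbove_range_Icc ⟨s, hs⟩

lemma Continuous.le_iSup_Icc_iff {f : ℝ → ℝ} (hf : Continuous f) (hab : a ≤ b) {x : ℝ} :
    x ≤ ⨆ t : Icc a b, f t ↔ ∃ s ∈ Icc a b, x ≤ f s := by
  refine ⟨fun hx => ?_, fun ⟨s, hs, hxs⟩ => hxs.trans (hf.le_iSup_Icc hs)⟩
  obtain ⟨s, hs, hmax⟩ := isCompact_Icc.exists_isMaxOn (nonempty_Icc.2 hab) hf.continuousOn
  have : Nonempty (Icc a b) := nonempty_Icc_subtype hab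
  exact ⟨s, hs, hx.trans (ciSup_le fun t => hmax t.2)⟩

lemma measurable_iSup_Icc {Ω : Type*} {mΩ : MeasurableSpace Ω} {u : ℝ → Ω → ℝ}
    (hc : ∀ ω, Continuous fun t => u t ω) (hm : ∀ t ∈ Icc a b, Measurable (u t)) :
    Measurable fun ω => ⨆ t : Icc a b, u t ω := by
  obtain ⟨D, hDc, hD⟩ := TopologicalSpace.exists_countable_dense (Icc a b)
  have := hDc.to_subtype
  have hsup : ∀ ω, ⨆ t : Icc a b, u t ω = ⨆ d : D, u d ω := fun ω =>
    (hD.ciSup' ((hc ω).comp continuous_subtype_val)).symm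
  simp_rw [hsup]
  exact Measurable.iSup fun d => hm d d.1.2

end SupIcc

namespace MeasureTheory

section HittingTime

variable {Ω : Type*} {u : ℝ → Ω → ℝ} {x n m : ℝ} {ω : Ω}

lemma le_hittingBtwn_Ici_of_continuous (hu : Continuous fun t => u t ω)
    (h : ∃ j ∈ Icc n m, x ≤ u j ω) : x ≤ u (hittingBtwn u (Ici x) n m ω) ω := by
  have hclosed : IsClosed (Icc n m ∩ {t | u t ω ∈ Ici x}) :=
    isClosed_Icc.inter (isClosed_le continuous_const hu)
  obtain ⟨j, hj, hxj⟩ := h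
  rw [hittingBtwn, if_pos ⟨j, hj, hxj⟩]
  exact (hclosed.csInf_mem ⟨j, hj, hxj⟩ (BddBelow.inter_of_left bddBelow_Icc)).2

lemma hittingBtwn_Ici_le_iff_of_continuous (hu : Continuous fun t => u t ω) {i : ℝ}
    (hi : i < m) : hittingBtwn u (Ici x) n m ω ≤ i ↔ ∃ j ∈ Icc n i, x ≤ u j ω := by
  refine ⟨fun hle => ?_, fun ⟨j, hj, hxj⟩ =>
    (hittingBtwn_le_of_mem hj.1 (hj.2.trans hi.le) hxj).trans hj.2⟩
  have h : ∃ j ∈ Icc n m, u j ω ∈ Ici x := by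
    by_contra h
    rw [hittingBtwn, if_neg h] at hle
    exact hle.not_gt hi
  exact ⟨_, ⟨le_hittingBtwn (h.elim fun j hj => hj.1.1.trans hj.1.2) ω, hle⟩,
    le_hittingBtwn_Ici_of_continuous hu h⟩

lemma hittingBtwn_Ici_eq_of_continuous (hu : Continuous fun t => u t ω) (hn : u n ω < x)
    (h : ∃ j ∈ Icc n m, x ≤ u j ω) : u (hittingBtwn u (Ici x) n m ω) ω = x := by
  have hnm : n ≤ m := h.elim fun j hj => hj.1.1.trans hj.1.2
  set τ := hittingBtwn u (Ici x) n m ω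
  obtain ⟨c, hc, hcx⟩ := intermediate_value_Icc (le_hittingBtwn hnm ω) hu.continuousOn
    ⟨hn.le, le_hittingBtwn_Ici_of_continuous hu h⟩
  have hτc : τ ≤ c := hittingBtwn_le_of_mem hc.1 (hc.2.trans (hittingBtwn_le ω)) hcx.ge
  rwa [le_antisymm hc.2 hτc] at hcx

lemma isStoppingTime_hittingBtwn_Ici {m0 : MeasurableSpace Ω} {ℱ : Filtration ℝ m0}
    (hadapt : StronglyAdapted ℱ u) (hc : ∀ ω, Continuous fun t => u t ω) :
    IsStoppingTime ℱ fun ω => ((hittingBtwn u (Ici x) n m ω : ℝ) : WithTop ℝ) := by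
  intro i
  simp only [WithTop.coe_le_coe]
  rcases le_or_gt m i with hmi | him
  · simp [(hittingBtwn_le _).trans hmi]
  simp_rw [hittingBtwn_Ici_le_iff_of_continuous (hc _) him]
  rcases lt_or_ge i n with hin | hni
  · simp [fun j (hj : n ≤ j) => (hin.trans_le hj).not_ge]
  simp_rw [← (hc _).le_iSup_Icc_iff hni]
  exact measurable_iSup_Icc hc (fun t ht => ((hadapt t).mono (ℱ.mono ht.2)).measurable)
    measurableSet_Ici

end HittingTime

section OptionalSampling

variable {Ω : Type*} {m0 : MeasurableSpace Ω} {μ : Measure Ω}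

lemma IsStoppingTime.ceil_mul_div {ℱ : Filtration ℝ m0} {τ : Ω → ℝ}
    (hτ : IsStoppingTime ℱ fun ω => (τ ω : WithTop ℝ)) {k : ℝ} (hk : 0 < k) :
    IsStoppingTime ℱ fun ω => ((⌈τ ω * k⌉ / k : ℝ) : WithTop ℝ) := by
  intro t
  have hset : {ω | ((⌈τ ω * k⌉ / k : ℝ) : WithTop ℝ) ≤ t} =
      {ω | (τ ω : WithTop ℝ) ≤ ↑(⌊t * k⌋ / k : ℝ)} := by
    ext ω
    simp only [WithTop.coe_le_coe, mem_ofPred_eq, div_le_iff₀ hk, le_div_iff₀ hk]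
    rw [← Int.le_floor, Int.ceil_le]
  rw [hset]
  exact ℱ.mono ((div_le_iff₀ hk).2 (Int.floor_le _)) _ (hτ _)

lemma Martingale.setIntegral_stoppedValue_of_countable_range {ι E : Type*} [LinearOrder ι]
    [TopologicalSpace ι] [OrderTopology ι] [FirstCountableTopology ι] [NormedAddCommGroup E]
    [NormedSpace ℝ E] [CompleteSpace E] [Nonempty ι] [IsFiniteMeasure μ] {ℱ : Filtration ι m0}
    {f : ι → Ω → E} (hf : Martingale f ℱ μ) {τ : Ω → WithTop ι} (hτ : IsStoppingTime ℱ τ)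
    {n : ι} (hτn : ∀ ω, τ ω ≤ n) (hτc : (range τ).Countable) {A : Set Ω}
    (hA : MeasurableSet[hτ.measurableSpace] A) :
    ∫ ω in A, stoppedValue f τ ω ∂μ = ∫ ω in A, f n ω ∂μ := by
  have hle := hτ.measurableSpace_le_of_le hτn
  rw [setIntegral_congr_ae (hle _ hA)
    ((hf.stoppedValue_ae_eq_condExp_of_le_const_of_countable_range hτ hτn hτc).mono
      fun ω h _ => h)]
  exact setIntegral_condExp hle (hf.integrable n) hA

lemma Martingale.setIntegral_stoppedValue_of_continuous [IsFiniteMeasure μ]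
    {ℱ : Filtration ℝ m0} {f : ℝ → Ω → ℝ} (hf : Martingale f ℱ μ)
    (hc : ∀ ω, Continuous fun t => f t ω) {τ : Ω → ℝ}
    (hτ : IsStoppingTime ℱ fun ω => (τ ω : WithTop ℝ)) {a T : ℝ} (hτT : ∀ ω, τ ω ∈ Icc a T)
    {g : Ω → ℝ} (hg : Integrable g μ) (hfg : ∀ t ∈ Icc a T, ∀ ω, ‖f t ω‖ ≤ g ω) {A : Set Ω}
    (hA : MeasurableSet[hτ.measurableSpace] A) :
    ∫ ω in A, f (τ ω) ω ∂μ = ∫ ω in A, f T ω ∂μ := by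
  -- countably-valued stopping times decreasing to `τ`, to which the discrete case applies
  set σ : ℕ → Ω → ℝ := fun n ω => min (⌈τ ω * (n + 1)⌉ / (n + 1)) T
  have hσ : ∀ n, IsStoppingTime ℱ fun ω => (σ n ω : WithTop ℝ) := fun n => by
    simpa only [σ, WithTop.coe_min] using
      (hτ.ceil_mul_div (Nat.cast_add_one_pos n)).min_const T
  have hτσ : ∀ n ω, τ ω ≤ σ n ω := fun n ω =>
    le_min ((le_div_iff₀ (Nat.cast_add_one_pos n)).2 (Int.le_ceil _)) (hτT ω).2
  have hστ : ∀ n ω, σ n ω ≤ τ ω + 1 / (n + 1) := fun n ω => by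
    refine (min_le_left _ _).trans ((div_le_iff₀ (Nat.cast_add_one_pos n)).2 ?_)
    rw [add_mul, one_div_mul_cancel (Nat.cast_add_one_pos n).ne']
    exact (Int.ceil_lt_add_one _).le
  have hσT : ∀ n ω, σ n ω ∈ Icc a T := fun n ω =>
    ⟨(hτT ω).1.trans (hτσ n ω), min_le_right _ _⟩
  have hσ_countable : ∀ n, (range fun ω => (σ n ω : WithTop ℝ)).Countable := fun n =>
    ((countable_range fun k : ℤ => ((min (k / (n + 1)) T : ℝ) : WithTop ℝ)).mono
      (by rintro _ ⟨ω, rfl⟩; exact ⟨_, rfl⟩))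
  have hσ_int : ∀ n, ∫ ω in A, f (σ n ω) ω ∂μ = ∫ ω in A, f T ω ∂μ := fun n =>
    hf.setIntegral_stoppedValue_of_countable_range (hσ n)
      (fun ω => WithTop.coe_le_coe.2 (hσT n ω).2) (hσ_countable n)
      (hτ.measurableSpace_mono (hσ n) (fun ω => WithTop.coe_le_coe.2 (hτσ n ω)) _ hA)
  have hσ_tendsto : ∀ ω, Tendsto (fun n => σ n ω) atTop (𝓝 (τ ω)) := fun ω => by
    have h : Tendsto (fun n : ℕ => τ ω + 1 / ((n : ℝ) + 1)) atTop (𝓝 (τ ω)) := by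
      simpa only [add_zero] using tendsto_one_div_add_atTop_nhds_zero_nat.const_add (τ ω)
    exact tendsto_of_tendsto_of_tendsto_of_le_of_le tendsto_const_nhds h
      (fun n => hτσ n ω) (fun n => hστ n ω)
  refine tendsto_nhds_unique (tendsto_integral_of_dominated_convergence g (fun n => ?_)
    hg.restrict (fun n => ae_of_all _ fun ω => hfg _ (hσT n ω) ω)
    (ae_of_all _ fun ω => ((hc ω).tendsto _).comp (hσ_tendsto ω))) ?_
  · exact ((measurable_stoppedValue (hf.stronglyAdapted.isStronglyProgressive_of_continuous hc)
      (hσ n)).mono (hσ n).measurableSpace_le le_rfl).aestronglyMeasurable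
  · simp_rw [hσ_int]
    exact tendsto_const_nhds

theorem Martingale.setIntegral_le_iSup_Icc_eq_mul_measureReal [IsFiniteMeasure μ]
    {ℱ : Filtration ℝ m0} {L : ℝ → Ω → ℝ} (hL : Martingale L ℱ μ)
    (hc : ∀ ω, Continuous fun t => L t ω) (hnn : ∀ t ω, 0 ≤ L t ω) {a T x : ℝ} (haT : a ≤ T)
    (ha : ∀ ω, L a ω < x) (hS : Integrable (fun ω => ⨆ t : Icc a T, L t ω) μ) :
    ∫ ω in {ω | x ≤ ⨆ t : Icc a T, L t ω}, L T ω ∂μ =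
      x * μ.real {ω | x ≤ ⨆ t : Icc a T, L t ω} := by
  set A := {ω | x ≤ ⨆ t : Icc a T, L t ω}
  set τ := hittingBtwn L (Ici x) a T
  have hτ : IsStoppingTime ℱ fun ω => (τ ω : WithTop ℝ) :=
    isStoppingTime_hittingBtwn_Ici hL.stronglyAdapted hc
  have hA_iff : ∀ ω, ω ∈ A ↔ ∃ j ∈ Icc a T, x ≤ L j ω := fun ω => (hc ω).le_iSup_Icc_iff haT
  have hLτ : ∀ ω ∈ A, L (τ ω) ω = x := fun ω hω =>
    hittingBtwn_Ici_eq_of_continuous (hc ω) (ha ω) ((hA_iff ω).1 hω)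
  have hA_eq : A = stoppedValue L (fun ω => (τ ω : WithTop ℝ)) ⁻¹' Ici x := by
    ext ω
    refine (hA_iff ω).trans ⟨le_hittingBtwn_Ici_of_continuous (hc ω), fun h => ?_⟩
    exact ⟨τ ω, hittingBtwn_mem_Icc haT ω, h⟩
  have hA : MeasurableSet[hτ.measurableSpace] A := hA_eq ▸
    measurable_stoppedValue (hL.stronglyAdapted.isStronglyProgressive_of_continuous hc) hτ
      measurableSet_Ici
  have hLS : ∀ t ∈ Icc a T, ∀ ω, ‖L t ω‖ ≤ ⨆ t : Icc a T, L t ω := fun t ht ω => by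
    rw [Real.norm_of_nonneg (hnn t ω)]
    exact (hc ω).le_iSup_Icc ht
  calc ∫ ω in A, L T ω ∂μ = ∫ ω in A, L (τ ω) ω ∂μ :=
        (hL.setIntegral_stoppedValue_of_continuous hc hτ (hittingBtwn_mem_Icc haT) hS hLS hA).symm
    _ = ∫ _ in A, x ∂μ := setIntegral_congr_fun (hτ.measurableSpace_le _ hA) hLτ
    _ = x * μ.real A := by rw [setIntegral_const, smul_eq_mul, mul_comm]

end OptionalSampling

end MeasureTheory

section LayerCake

lemma lintegral_Ioc_inv_one_add {s : ℝ} (hs : 1 ≤ s) :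
    ∫⁻ t in Ioc 0 (s - 1), ENNReal.ofReal (1 + t)⁻¹ = ENNReal.ofReal (Real.log s) := by
  have hcont : ContinuousOn (fun t : ℝ => (1 + t)⁻¹) (Icc 0 (s - 1)) :=
    ContinuousOn.inv₀ (by fun_prop) fun t ht => by linarith [ht.1]
  rw [← ofReal_integral_eq_lintegral_ofReal (hcont.integrableOn_Icc.mono_set Ioc_subset_Icc_self)
    ((ae_restrict_iff' measurableSet_Ioc).2 (ae_of_all _ fun t ht => by
      have := ht.1; positivity)),
    ← intervalIntegral.integral_of_le (by linarith),
    intervalIntegral.integral_comp_add_left (fun t => t⁻¹),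
    integral_inv_of_pos (by norm_num) (by linarith)]
  congr 2
  ring

variable {Ω : Type*} {m0 : MeasurableSpace Ω} {μ : Measure Ω}

lemma lintegral_ofReal_sub_one_eq_lintegral_mul_log [SFinite μ] {X S : Ω → ℝ}
    (hX : Measurable X) (hS : Measurable S) (hS1 : ∀ ω, 1 ≤ S ω)
    (h : ∀ x, 1 < x → ∫⁻ ω in {ω | x ≤ S ω}, ENNReal.ofReal (X ω) ∂μ =
      ENNReal.ofReal x * μ {ω | x ≤ S ω}) :
    ∫⁻ ω, ENNReal.ofReal (S ω - 1) ∂μ = ∫⁻ ω, ENNReal.ofReal (X ω * Real.log (S ω)) ∂μ := by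
  set F : ℝ → Ω → ℝ≥0∞ := fun t =>
    {ω | 1 + t ≤ S ω}.indicator fun ω => ENNReal.ofReal (1 + t)⁻¹ * ENNReal.ofReal (X ω)
  have hF : Measurable (Function.uncurry F) := by
    have hF_eq : Function.uncurry F = {p : ℝ × Ω | 1 + p.1 ≤ S p.2}.indicator
        fun p => ENNReal.ofReal (1 + p.1)⁻¹ * ENNReal.ofReal (X p.2) := by
      ext ⟨t, ω⟩; rfl
    rw [hF_eq]
    exact Measurable.indicator (by fun_prop)
      (measurableSet_le (by fun_prop) (hS.comp measurable_snd))
  have hlevel : ∀ t ∈ Ioi (0 : ℝ), μ {ω | t ≤ S ω - 1} = ∫⁻ ω, F t ω ∂μ := fun t ht => by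
    have h1t : 0 < 1 + t := by linarith [mem_Ioi.1 ht]
    simp only [F, le_sub_iff_add_le']
    rw [lintegral_indicator (measurableSet_le measurable_const hS),
      lintegral_const_mul _ hX.ennreal_ofReal, h _ (by linarith [mem_Ioi.1 ht]), ← mul_assoc,
      ← ENNReal.ofReal_mul (by positivity), inv_mul_cancel₀ h1t.ne', ENNReal.ofReal_one,
      one_mul]
  have hsection : ∀ ω, ∫⁻ t in Ioi (0 : ℝ), F t ω =
      ENNReal.ofReal (X ω * Real.log (S ω)) := fun ω => by
    have hF_eq : (fun t => F t ω) = (Iic (S ω - 1)).indicator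
        fun t => ENNReal.ofReal (1 + t)⁻¹ * ENNReal.ofReal (X ω) := by
      ext t
      simp only [F, indicator_apply, mem_ofPred_eq, mem_Iic, le_sub_iff_add_le']
    rw [hF_eq, lintegral_indicator measurableSet_Iic, Measure.restrict_restrict measurableSet_Iic,
      inter_comm, Ioi_inter_Iic, lintegral_mul_const' _ _ ENNReal.ofReal_ne_top,
      lintegral_Ioc_inv_one_add (hS1 ω), mul_comm,
      ENNReal.ofReal_mul' (Real.log_nonneg (hS1 ω))]
  calc ∫⁻ ω, ENNReal.ofReal (S ω - 1) ∂μ = ∫⁻ t in Ioi 0, μ {ω | t ≤ S ω - 1} :=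
        lintegral_eq_lintegral_meas_le μ (ae_of_all _ fun ω => sub_nonneg.2 (hS1 ω))
          (hS.sub_const 1).aemeasurable
    _ = ∫⁻ t in Ioi 0, ∫⁻ ω, F t ω ∂μ := setLIntegral_congr_fun measurableSet_Ioi hlevel
    _ = ∫⁻ ω, (∫⁻ t in Ioi 0, F t ω) ∂μ := lintegral_lintegral_swap hF.aemeasurable
    _ = ∫⁻ ω, ENNReal.ofReal (X ω * Real.log (S ω)) ∂μ := lintegral_congr hsection

end LayerCake

theorem max_log_identity_of_ui_martingale_general
    {Ω : Type*} {m0 : MeasurableSpace Ω} {μ : Measure Ω} [IsProbabilityMeasure μ]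
    (ℱ : Filtration ℝ m0) (L : ℝ → Ω → ℝ) (T : ℝ) (hT : 0 ≤ T)
    (hmart : Martingale L ℱ μ)
    (hcont : ∀ ω, Continuous fun t => L t ω)
    (hpos : ∀ t ω, 0 < L t ω)
    (h0 : ∀ ω, L 0 ω = 1)
    (S : Ω → ℝ) (hS : ∀ ω, S ω = ⨆ u : Icc (0:ℝ) T, L (u : ℝ) ω)
    (hSint : Integrable S μ)
    (hint1 : Integrable (fun ω => L T ω * Real.log (S ω)) μ)
    (hint2 : Integrable (fun ω => L T ω * Real.log (L T ω)) μ) :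
    (∫ ω, S ω ∂μ) - 1 = ∫ ω, L T ω * Real.log (S ω) ∂μ ∧
    ∫ ω, L T ω * Real.log (L T ω) ∂μ ≤ (∫ ω, S ω ∂μ) - 1 := by
  obtain rfl : S = fun ω => ⨆ u : Icc (0:ℝ) T, L u ω := funext hS
  have hLmeas : ∀ t, Measurable (L t) := fun t =>
    (hmart.stronglyAdapted t).measurable.mono (ℱ.le t) le_rfl
  have hS1 : ∀ ω, 1 ≤ ⨆ u : Icc (0:ℝ) T, L u ω := fun ω =>
    h0 ω ▸ (hcont ω).le_iSup_Icc ⟨le_rfl, hT⟩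
  have hdoob : ∀ x, 1 < x →
      ∫⁻ ω in {ω | x ≤ ⨆ u : Icc (0:ℝ) T, L u ω}, ENNReal.ofReal (L T ω) ∂μ =
        ENNReal.ofReal x * μ {ω | x ≤ ⨆ u : Icc (0:ℝ) T, L u ω} := fun x hx => by
    rw [← ofReal_integral_eq_lintegral_ofReal (hmart.integrable T).integrableOn
      (ae_of_all _ fun ω => (hpos T ω).le), hmart.setIntegral_le_iSup_Icc_eq_mul_measureReal
      hcont (fun t ω => (hpos t ω).le) hT (fun ω => (h0 ω).trans_lt hx) hSint,
      ENNReal.ofReal_mul (by linarith), ofReal_measureReal]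
  have hmain : (∫ ω, ⨆ u : Icc (0:ℝ) T, L u ω ∂μ) - 1 =
      ∫ ω, L T ω * Real.log (⨆ u : Icc (0:ℝ) T, L u ω) ∂μ := by
    rw [show ∀ c : ℝ, c - 1 = c - ∫ _, 1 ∂μ by simp, ← integral_sub hSint (integrable_const 1),
      integral_eq_lintegral_of_nonneg_ae (ae_of_all _ fun ω => sub_nonneg.2 (hS1 ω))
        (hSint.sub (integrable_const 1)).aestronglyMeasurable,
      integral_eq_lintegral_of_nonneg_ae (ae_of_all _ fun ω =>
        mul_nonneg (hpos T ω).le (Real.log_nonneg (hS1 ω))) hint1.aestronglyMeasurable,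
      lintegral_ofReal_sub_one_eq_lintegral_mul_log (hLmeas T)
        (measurable_iSup_Icc hcont fun t _ => hLmeas t) hS1 hdoob]
  refine ⟨hmain, hmain ▸ integral_mono hint2 hint1 fun ω => ?_⟩
  exact mul_le_mul_of_nonneg_left
    (Real.log_le_log (hpos T ω) ((hcont ω).le_iSup_Icc ⟨hT, le_rfl⟩)) (hpos T ω).le

/-- **Doob's identity for the running maximum.**
If `L` is a positive continuous uniformly integrable martingale on `[0,T]` with `L 0 = 1`
and `S` denotes its running supremum over `[0,T]`, then
`E[S] - 1 = E[L_T · log S]` and consequently `E[S] - 1 ≥ E[L_T · log L_T]`. -/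
theorem max_log_identity_of_ui_martingale
    {Ω : Type*} {m0 : MeasurableSpace Ω} {μ : Measure Ω} [IsProbabilityMeasure μ]
    (ℱ : Filtration ℝ m0) (L : ℝ → Ω → ℝ) (T : ℝ) (hT : 0 ≤ T)
    (hmart : Martingale L ℱ μ)
    (hcont : ∀ ω, Continuous fun t => L t ω)
    (hpos : ∀ t ω, 0 < L t ω)
    (h0 : ∀ ω, L 0 ω = 1)
    (hui : ∀ t, t ≤ T → L t =ᵐ[μ] μ[L T | ℱ t])
    (S : Ω → ℝ) (hS : ∀ ω, S ω = ⨆ u : Icc (0:ℝ) T, L (u : ℝ) ω)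
    (hSint : Integrable S μ)
    (hint1 : Integrable (fun ω => L T ω * Real.log (S ω)) μ)
    (hint2 : Integrable (fun ω => L T ω * Real.log (L T ω)) μ) :
    (∫ ω, S ω ∂μ) - 1 = ∫ ω, L T ω * Real.log (S ω) ∂μ ∧
    ∫ ω, L T ω * Real.log (L T ω) ∂μ ≤ (∫ ω, S ω ∂μ) - 1 :=
  max_log_identity_of_ui_martingale_general ℱ L T hT hmart hcont hpos h0 S hS hSint hint1 hint2
end

section
/- (Harremoës inequality) Let L be a positive continuous uniformly integrable martingale with L_0 = 1 and let x* = E[max L_T] where max L_T = sup_{0≤u≤T} L_u. Then x* - 1 - ln(x*) ≤ E[L_T ln(L_T)]. In particular, if E[L_T ln L_T] < ∞ then E[max L_T] < ∞. -/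
/-!
Sampling the continuous martingale along the dyadic grids of `[0, T]`, Doob's discrete maximal
inequality gives the weak bound `t P(S > t) ≤ E[L_T; S ≥ t]`. Integrating it against `dt / t`
over `(1, ∞)` (layer cake and Tonelli) gives `E[S ∧ n] ≤ 1 + E[L_T log (S ∧ n)]`, and the Gibbs
inequality `E[L_T log Y] ≤ E[L_T log L_T] + log E[Y]` turns this into
`x - 1 - log x ≤ E[L_T log L_T]` for `x = E[S ∧ n]`. As `x - 1 - log x ≥ x / 2 - 1`, these
truncated means stay bounded, and the inequality passes to the limit `n → ∞`.
-/

open MeasureTheory Filter Set Topology Real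

theorem mul_log_le_mul_log_sub_add {z y : ℝ} (hz : 0 ≤ z) (hy : 0 < y) :
    z * log y ≤ z * log z - z + y := by
  rcases hz.eq_or_lt with rfl | hz
  · simpa using hy.le
  have h := mul_le_mul_of_nonneg_left (log_le_sub_one_of_pos (div_pos hy hz)) hz.le
  rw [log_div hy.ne' hz.ne', mul_sub_one, mul_div_cancel₀ _ hz.ne'] at h
  linarith

theorem log_le_half_self {x : ℝ} (hx : 0 < x) : log x ≤ x / 2 := by
  have h := log_le_sub_one_of_pos (half_pos hx)
  rw [log_div hx.ne' two_ne_zero] at h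
  linarith [log_two_lt_d9]

theorem lintegral_Ioc_one_ofReal_inv {b : ℝ} (hb : 0 ≤ b) :
    ∫⁻ t in Ioc 1 b, ENNReal.ofReal t⁻¹ = ENNReal.ofReal (log b) := by
  rcases lt_or_ge b 1 with hb1 | hb1
  · rw [Ioc_eq_empty (not_lt.2 hb1.le), Measure.restrict_empty, lintegral_zero_measure,
      ENNReal.ofReal_of_nonpos (log_nonpos hb hb1.le)]
  have hinv : IntegrableOn (fun t : ℝ => t⁻¹) (Ioc 1 b) := by
    rw [← intervalIntegrable_iff_integrableOn_Ioc_of_le hb1]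
    exact intervalIntegral.intervalIntegrable_inv (fun t ht => by
      rw [uIcc_of_le hb1] at ht; linarith [ht.1]) continuousOn_id
  rw [← ofReal_integral_eq_lintegral_ofReal hinv
    ((ae_restrict_iff' measurableSet_Ioc).2 (ae_of_all _ fun t ht => by
      have := ht.1; positivity)), ← intervalIntegral.integral_of_le hb1,
    integral_inv (by rw [uIcc_of_le hb1]; exact fun h => by linarith [h.1]), div_one]

theorem iSup_ofReal_ne_top_and_sub_one_sub_log_le {m : ℕ → ℝ} {H : ℝ} (hm : Monotone m)
    (hm0 : 0 < m 0) (hH : ∀ n, m n - 1 - log (m n) ≤ H) :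
    (⨆ n, ENNReal.ofReal (m n)) ≠ ⊤ ∧
      (⨆ n, ENNReal.ofReal (m n)).toReal - 1 - log (⨆ n, ENNReal.ofReal (m n)).toReal ≤ H := by
  have hpos : ∀ n, 0 < m n := fun n => hm0.trans_le (hm (Nat.zero_le n))
  have hbdd : ∀ n, m n ≤ 2 * (H + 1) := fun n => by
    linarith [hH n, log_le_half_self (hpos n)]
  have hne : (⨆ n, ENNReal.ofReal (m n)) ≠ ⊤ :=
    ne_top_of_le_ne_top ENNReal.ofReal_ne_top (iSup_le fun n => ENNReal.ofReal_le_ofReal (hbdd n))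
  refine ⟨hne, ?_⟩
  rw [ENNReal.toReal_iSup fun n => ENNReal.ofReal_ne_top]
  simp_rw [ENNReal.toReal_ofReal (hpos _).le]
  have hlim := tendsto_atTop_ciSup hm ⟨_, forall_mem_range.2 hbdd⟩
  have hsup_pos : 0 < ⨆ n, m n := (hpos 0).trans_le (le_ciSup ⟨_, forall_mem_range.2 hbdd⟩ 0)
  exact le_of_tendsto' ((hlim.sub_const 1).sub (hlim.log hsup_pos.ne')) hH

section LLogL

variable {Ω : Type*} {m0 : MeasurableSpace Ω} {μ : Measure Ω}

theorem integral_mul_log_le_integral_mul_log_add_log_integral {Z s : Ω → ℝ} (hZ0 : 0 ≤ Z)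
    (hZi : Integrable Z μ) (hZ1 : ∫ ω, Z ω ∂μ = 1) (hs : ∀ ω, 0 < s ω) (hsi : Integrable s μ)
    (hZZ : Integrable (fun ω => Z ω * log (Z ω)) μ)
    (hZs : Integrable (fun ω => Z ω * log (s ω)) μ) :
    ∫ ω, Z ω * log (s ω) ∂μ ≤ ∫ ω, Z ω * log (Z ω) ∂μ + log (∫ ω, s ω ∂μ) := by
  set m := ∫ ω, s ω ∂μ
  have hμ : μ ≠ 0 := by rintro rfl; simp at hZ1
  have hm : 0 < m := by
    rw [integral_pos_iff_support_of_nonneg (fun ω => (hs ω).le) hsi,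
      Function.support_eq_univ fun ω => (hs ω).ne']
    exact Measure.measure_univ_pos.2 hμ
  have hpt : ∀ ω, Z ω * log (s ω) ≤
      Z ω * log (Z ω) - Z ω + s ω / m + Z ω * log m := fun ω => by
    have h := mul_log_le_mul_log_sub_add (hZ0 ω) (div_pos (hs ω) hm)
    rw [log_div (hs ω).ne' hm.ne'] at h
    linarith
  have h₁ : Integrable (fun ω => Z ω * log (Z ω) - Z ω) μ := hZZ.sub hZi
  have h₂ : Integrable (fun ω => Z ω * log (Z ω) - Z ω + s ω / m) μ := h₁.add (hsi.div_const m)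
  have := integral_mono (g := fun ω => Z ω * log (Z ω) - Z ω + s ω / m + Z ω * log m) hZs
    (h₂.add (hZi.mul_const (log m))) hpt
  rw [integral_add h₂ (hZi.mul_const _), integral_add h₁ (hsi.div_const m),
    integral_sub hZZ hZi, integral_div,
    integral_mul_const, hZ1, div_self hm.ne'] at this
  linarith


theorem lintegral_ofReal_le_one_add_lintegral_mul_log [IsProbabilityMeasure μ] {Y Z : Ω → ℝ}
    (hY : Measurable Y) (hY0 : 0 ≤ Y) (hZ : Measurable Z) (hZ0 : 0 ≤ Z)
    (hmax : ∀ t, 1 < t → ENNReal.ofReal t * μ {ω | t < Y ω} ≤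
      ∫⁻ ω in {ω | t ≤ Y ω}, ENNReal.ofReal (Z ω) ∂μ) :
    ∫⁻ ω, ENNReal.ofReal (Y ω) ∂μ ≤ 1 + ∫⁻ ω, ENNReal.ofReal (Z ω * log (Y ω)) ∂μ := by
  set F : ℝ → Ω → ENNReal := fun t ω =>
    (Iic (Y ω)).indicator (fun t => ENNReal.ofReal t⁻¹) t * ENNReal.ofReal (Z ω)
  have hF : Measurable (Function.uncurry F) :=
    (Measurable.indicator (measurable_fst.inv.ennreal_ofReal)
      (measurableSet_le measurable_fst (hY.comp measurable_snd))).mul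
      (hZ.comp measurable_snd).ennreal_ofReal
  have hF_ω : ∀ t, ∫⁻ ω, F t ω ∂μ =
      ENNReal.ofReal t⁻¹ * ∫⁻ ω in {ω | t ≤ Y ω}, ENNReal.ofReal (Z ω) ∂μ := fun t => by
    rw [← lintegral_const_mul' _ _ ENNReal.ofReal_ne_top,
      ← lintegral_indicator (measurableSet_le measurable_const hY)]
    congr 1 with ω
    by_cases h : t ≤ Y ω <;> simp [F, h]
  have hF_t : ∀ ω, ∫⁻ t in Ioi 1, F t ω = ENNReal.ofReal (Z ω * log (Y ω)) := fun ω => by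
    rw [lintegral_mul_const' _ _ ENNReal.ofReal_ne_top, lintegral_indicator measurableSet_Iic,
      Measure.restrict_restrict measurableSet_Iic, Iic_inter_Ioi,
      lintegral_Ioc_one_ofReal_inv (hY0 ω), mul_comm, ENNReal.ofReal_mul (hZ0 ω)]
  have hlow : ∫⁻ t in Ioc 0 1, μ {ω | t < Y ω} ≤ 1 :=
    calc ∫⁻ t in Ioc 0 1, μ {ω | t < Y ω} ≤ ∫⁻ _ in Ioc (0 : ℝ) 1, 1 :=
          lintegral_mono fun _ => prob_le_one
      _ = 1 := by simp
  have hhigh : ∫⁻ t in Ioi 1, μ {ω | t < Y ω} ≤ ∫⁻ t in Ioi 1, ∫⁻ ω, F t ω ∂μ := by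
    refine setLIntegral_mono' measurableSet_Ioi fun t (ht : 1 < t) => ?_
    have ht0 : ENNReal.ofReal t ≠ 0 := by simp; linarith
    rw [hF_ω, ENNReal.ofReal_inv_of_pos (by linarith),
      ← ENNReal.inv_mul_cancel_left ht0 ENNReal.ofReal_ne_top (b := μ _)]
    gcongr
    exact hmax t ht
  calc ∫⁻ ω, ENNReal.ofReal (Y ω) ∂μ
      = (∫⁻ t in Ioc 0 1, μ {ω | t < Y ω}) + ∫⁻ t in Ioi 1, μ {ω | t < Y ω} := by
        rw [lintegral_eq_lintegral_meas_lt μ (ae_of_all _ hY0) hY.aemeasurable,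
          ← lintegral_union measurableSet_Ioi (Ioc_disjoint_Ioi le_rfl),
          Ioc_union_Ioi_eq_Ioi zero_le_one]
    _ ≤ 1 + ∫⁻ t in Ioi 1, ∫⁻ ω, F t ω ∂μ := add_le_add hlow hhigh
    _ = 1 + ∫⁻ ω, ENNReal.ofReal (Z ω * log (Y ω)) ∂μ := by
        rw [lintegral_lintegral_swap hF.aemeasurable]
        simp_rw [hF_t]

theorem ofReal_mul_measure_lt_min_le {Y Z : Ω → ℝ} {t : ℝ} (c : ℝ)
    (h : ENNReal.ofReal t * μ {ω | t < Y ω} ≤ ∫⁻ ω in {ω | t ≤ Y ω}, ENNReal.ofReal (Z ω) ∂μ) :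
    ENNReal.ofReal t * μ {ω | t < min (Y ω) c} ≤
      ∫⁻ ω in {ω | t ≤ min (Y ω) c}, ENNReal.ofReal (Z ω) ∂μ := by
  rcases lt_or_ge t c with htc | htc
  · simpa [lt_min_iff, le_min_iff, htc, htc.le] using h
  · simp [not_lt.2 htc]

theorem sub_one_sub_log_integral_le_of_le [IsProbabilityMeasure μ] {Y Z : Ω → ℝ} {c : ℝ}
    (hY : Measurable Y) (hY1 : ∀ ω, 1 ≤ Y ω) (hYc : ∀ ω, Y ω ≤ c) (hZ : Measurable Z)
    (hZ0 : 0 ≤ Z) (hZi : Integrable Z μ) (hZ1 : ∫ ω, Z ω ∂μ = 1)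
    (hZZ : Integrable (fun ω => Z ω * log (Z ω)) μ)
    (hmax : ∀ t, 1 < t → ENNReal.ofReal t * μ {ω | t < Y ω} ≤
      ∫⁻ ω in {ω | t ≤ Y ω}, ENNReal.ofReal (Z ω) ∂μ) :
    ∫ ω, Y ω ∂μ - 1 - log (∫ ω, Y ω ∂μ) ≤ ∫ ω, Z ω * log (Z ω) ∂μ := by
  have hY0 : 0 ≤ Y := fun ω => zero_le_one.trans (hY1 ω)
  have hZlogY : 0 ≤ fun ω => Z ω * log (Y ω) := fun ω => mul_nonneg (hZ0 ω) (log_nonneg (hY1 ω))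
  have hYi : Integrable Y μ := .of_bound hY.aestronglyMeasurable c
    (ae_of_all _ fun ω => by rw [norm_of_nonneg (by linarith [hY1 ω])]; exact hYc ω)
  have hZYi : Integrable (fun ω => Z ω * log (Y ω)) μ :=
    (hZi.mul_const (log c)).mono' (hZ.mul hY.log).aestronglyMeasurable <| ae_of_all _ fun ω => by
      rw [norm_of_nonneg (hZlogY ω)]
      exact mul_le_mul_of_nonneg_left (log_le_log (by linarith [hY1 ω]) (hYc ω)) (hZ0 ω)
  have hlayer : ∫ ω, Y ω ∂μ ≤ 1 + ∫ ω, Z ω * log (Y ω) ∂μ := by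
    have h := lintegral_ofReal_le_one_add_lintegral_mul_log hY hY0 hZ hZ0 hmax
    rw [← ofReal_integral_eq_lintegral_ofReal hYi (ae_of_all _ hY0),
      ← ofReal_integral_eq_lintegral_ofReal hZYi (ae_of_all _ hZlogY), ← ENNReal.ofReal_one,
      ← ENNReal.ofReal_add zero_le_one (integral_nonneg hZlogY)] at h
    exact (ENNReal.ofReal_le_ofReal_iff (add_nonneg zero_le_one (integral_nonneg hZlogY))).1 h
  linarith [integral_mul_log_le_integral_mul_log_add_log_integral hZ0 hZi hZ1
    (fun ω => zero_lt_one.trans_le (hY1 ω)) hYi hZZ hZYi]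

theorem harremoes_of_maximal_ineq [IsProbabilityMeasure μ] {Y Z : Ω → ℝ}
    (hY : Measurable Y) (hY1 : ∀ ω, 1 ≤ Y ω) (hZ : Measurable Z)
    (hZ0 : 0 ≤ Z) (hZi : Integrable Z μ) (hZ1 : ∫ ω, Z ω ∂μ = 1)
    (hZZ : Integrable (fun ω => Z ω * log (Z ω)) μ)
    (hmax : ∀ t, 1 < t → ENNReal.ofReal t * μ {ω | t < Y ω} ≤
      ENNReal.ofReal (∫ ω in {ω | t ≤ Y ω}, Z ω ∂μ)) :
    (∫⁻ ω, ENNReal.ofReal (Y ω) ∂μ) ≠ ⊤ ∧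
      (∫⁻ ω, ENNReal.ofReal (Y ω) ∂μ).toReal - 1 - log (∫⁻ ω, ENNReal.ofReal (Y ω) ∂μ).toReal ≤
        ∫ ω, Z ω * log (Z ω) ∂μ := by
  set m : ℕ → ℝ := fun n => ∫ ω, min (Y ω) (n + 1) ∂μ
  have hYn_int : ∀ n : ℕ, Integrable (fun ω => min (Y ω) (n + 1)) μ := fun n =>
    .of_bound (hY.min measurable_const).aestronglyMeasurable (n + 1) (ae_of_all _ fun ω => by
      rw [norm_of_nonneg (le_min (by linarith [hY1 ω]) (by positivity))]
      exact min_le_right _ _)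
  have hY_eq : ∫⁻ ω, ENNReal.ofReal (Y ω) ∂μ = ⨆ n, ENNReal.ofReal (m n) := by
    have hpt : ∀ ω, ENNReal.ofReal (Y ω) = ⨆ n : ℕ, ENNReal.ofReal (min (Y ω) (n + 1)) :=
      fun ω => le_antisymm
        (le_iSup_of_le ⌈Y ω⌉₊ (by rw [min_eq_left ((Nat.le_ceil _).trans (by simp))]))
        (iSup_le fun n => ENNReal.ofReal_le_ofReal (min_le_left _ _))
    rw [lintegral_congr hpt, lintegral_iSup (fun n => (hY.min measurable_const).ennreal_ofReal)
      fun a b hab ω => ENNReal.ofReal_le_ofReal (min_le_min_left _ (by gcongr))]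
    congr 1 with n
    exact (ofReal_integral_eq_lintegral_ofReal (hYn_int n)
      (ae_of_all _ fun ω => le_min (zero_le_one.trans (hY1 ω)) (by positivity))).symm
  have hm : Monotone m := fun a b hab => integral_mono (hYn_int a) (hYn_int b) fun ω =>
    min_le_min_left _ (by gcongr)
  have hm0 : 0 < m 0 := by simp [m, hY1]
  have hH : ∀ n : ℕ, m n - 1 - log (m n) ≤ ∫ ω, Z ω * log (Z ω) ∂μ := fun n =>
    sub_one_sub_log_integral_le_of_le (hY.min measurable_const) (fun ω => le_min (hY1 ω) (by simp))
      (fun ω => min_le_right _ _) hZ hZ0 hZi hZ1 hZZ fun t ht =>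
        ofReal_mul_measure_lt_min_le _ <| (hmax t ht).trans_eq <|
          ofReal_integral_eq_lintegral_ofReal hZi.integrableOn (ae_of_all _ hZ0)
  rw [hY_eq]
  exact iSup_ofReal_ne_top_and_sub_one_sub_log_le hm hm0 hH

end LLogL

/-- The `i`-th point of the `k`-th dyadic grid of `[0, T]`; indices `i ≥ 2 ^ k` all give `T`, so
each grid is a monotone sequence indexed by all of `ℕ`. -/
noncomputable def dyadicPoint (T : ℝ) (k i : ℕ) : ℝ := T * min ((i : ℝ) / 2 ^ k) 1

section DyadicGrid

variable {T : ℝ}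

theorem dyadicPoint_mem_Icc (hT : 0 ≤ T) (k i : ℕ) : dyadicPoint T k i ∈ Icc 0 T :=
  ⟨mul_nonneg hT (le_min (by positivity) zero_le_one), mul_le_of_le_one_right hT (min_le_right _ _)⟩

theorem monotone_dyadicPoint (hT : 0 ≤ T) (k : ℕ) : Monotone (dyadicPoint T k) :=
  fun i j hij => by unfold dyadicPoint; gcongr

theorem dyadicPoint_of_two_pow_le (T : ℝ) {k i : ℕ} (hi : 2 ^ k ≤ i) : dyadicPoint T k i = T := by
  rw [dyadicPoint, min_eq_right ((one_le_div (by positivity)).2 (by exact_mod_cast hi)), mul_one]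

theorem dyadicPoint_succ_two_mul (T : ℝ) (k i : ℕ) :
    dyadicPoint T (k + 1) (2 * i) = dyadicPoint T k i := by
  rw [dyadicPoint, dyadicPoint, Nat.cast_mul, Nat.cast_ofNat, pow_succ, mul_comm (2 ^ k : ℝ),
    mul_div_mul_left _ _ two_ne_zero]

theorem tendsto_dyadicPoint {u : ℝ} (hu : u ∈ Icc 0 T) :
    Tendsto (fun k => dyadicPoint T k ⌊u / T * 2 ^ k⌋₊) atTop (𝓝 u) := by
  have hx : 0 ≤ u / T := div_nonneg hu.1 (hu.1.trans hu.2)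
  have hTx : T * min (u / T) 1 = u := by
    rcases (hu.1.trans hu.2).eq_or_lt with rfl | hT
    · exact (le_antisymm hu.2 hu.1).symm ▸ (zero_mul _)
    · rw [min_eq_left (div_le_one_of_le₀ hu.2 hT.le), mul_div_cancel₀ _ hT.ne']
  have h := (((tendsto_nat_floor_mul_div_atTop hx).comp
    (tendsto_pow_atTop_atTop_of_one_lt one_lt_two)).min (tendsto_const_nhds (x := 1))).const_mul T
  rw [hTx] at h
  exact h

noncomputable def dyadicMax (f : ℝ → ℝ) (T : ℝ) (k : ℕ) : ℝ :=
  (Finset.range (2 ^ k + 1)).sup' Finset.nonempty_range_add_one fun i => f (dyadicPoint T k i)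

theorem apply_dyadicPoint_le_dyadicMax (f : ℝ → ℝ) (T : ℝ) (k i : ℕ) :
    f (dyadicPoint T k i) ≤ dyadicMax f T k := by
  rcases le_total i (2 ^ k) with hi | hi
  · exact Finset.le_sup' (fun i => f (dyadicPoint T k i)) (Finset.mem_range_succ_iff.2 hi)
  · calc f (dyadicPoint T k i) = f (dyadicPoint T k (2 ^ k)) := by
          rw [dyadicPoint_of_two_pow_le T hi, dyadicPoint_of_two_pow_le T le_rfl]
      _ ≤ dyadicMax f T k :=
          Finset.le_sup' (fun i => f (dyadicPoint T k i)) (Finset.mem_range_succ_iff.2 le_rfl)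

theorem monotone_dyadicMax (f : ℝ → ℝ) (T : ℝ) : Monotone (dyadicMax f T) :=
  monotone_nat_of_le_succ fun k => Finset.sup'_le _ _ fun i _ => by
    rw [← dyadicPoint_succ_two_mul]
    exact apply_dyadicPoint_le_dyadicMax f T (k + 1) (2 * i)

theorem dyadicMax_le_iSup {f : ℝ → ℝ} (hf : Continuous f) (hT : 0 ≤ T) (k : ℕ) :
    dyadicMax f T k ≤ ⨆ u : Icc 0 T, f u :=
  Finset.sup'_le _ _ fun i _ =>
    le_ciSup (isCompact_range (hf.comp continuous_subtype_val)).bddAbove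
      ⟨_, dyadicPoint_mem_Icc hT k i⟩

theorem iSup_dyadicMax {f : ℝ → ℝ} (hf : Continuous f) (hT : 0 ≤ T) :
    ⨆ k, dyadicMax f T k = ⨆ u : Icc 0 T, f u := by
  have : Nonempty (Icc 0 T) := (nonempty_Icc.2 hT).to_subtype
  have hle := dyadicMax_le_iSup hf hT
  refine le_antisymm (ciSup_le hle) (ciSup_le fun u => ?_)
  exact le_of_tendsto' ((hf.tendsto u).comp (tendsto_dyadicPoint u.2)) fun k =>
    (apply_dyadicPoint_le_dyadicMax f T k _).trans (le_ciSup ⟨_, forall_mem_range.2 hle⟩ k)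

end DyadicGrid

section ContinuousMartingale

variable {Ω : Type*} {m0 : MeasurableSpace Ω} {μ : Measure Ω}

def MeasureTheory.Filtration.sample {ι κ : Type*} [Preorder ι] [Preorder κ]
    (ℱ : Filtration ι m0) {τ : κ → ι} (hτ : Monotone τ) : Filtration κ m0 where
  seq k := ℱ (τ k)
  mono' _ _ h := ℱ.mono (hτ h)
  le' k := ℱ.le (τ k)

theorem MeasureTheory.Submartingale.sample {ι κ : Type*} [Preorder ι] [Preorder κ]
    {ℱ : Filtration ι m0} {X : ι → Ω → ℝ} (hX : Submartingale X ℱ μ) {τ : κ → ι} (hτ : Monotone τ) :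
    Submartingale (fun k => X (τ k)) (ℱ.sample hτ) μ :=
  ⟨fun k => hX.stronglyAdapted (τ k), fun _ _ h => hX.2.1 _ _ (hτ h), fun k => hX.integrable (τ k)⟩

noncomputable def runningSup (X : ℝ → Ω → ℝ) (T : ℝ) (ω : Ω) : ℝ := ⨆ u : Icc (0 : ℝ) T, X u ω

variable {X : ℝ → Ω → ℝ} {T : ℝ}

theorem le_runningSup {ω : Ω} (hX : Continuous fun t => X t ω) {u : ℝ} (hu : u ∈ Icc 0 T) :
    X u ω ≤ runningSup X T ω :=
  le_ciSup (isCompact_range (hX.comp continuous_subtype_val)).bddAbove ⟨u, hu⟩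

theorem runningSup_eq_iSup_dyadicMax {ω : Ω} (hX : Continuous fun t => X t ω) (hT : 0 ≤ T) :
    runningSup X T ω = ⨆ k, dyadicMax (X · ω) T k :=
  (iSup_dyadicMax hX hT).symm

theorem measurable_runningSup (hXm : ∀ t, Measurable (X t)) (hX : ∀ ω, Continuous fun t => X t ω)
    (hT : 0 ≤ T) : Measurable (runningSup X T) := by
  have h : runningSup X T = fun ω => ⨆ k, dyadicMax (X · ω) T k :=
    funext fun ω => runningSup_eq_iSup_dyadicMax (hX ω) hT
  rw [h]
  exact .iSup fun k => Finset.measurable_range_sup'' fun i _ => hXm _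

theorem MeasureTheory.Submartingale.ofReal_mul_measure_lt_runningSup_le [IsFiniteMeasure μ]
    {ℱ : Filtration ℝ m0} (hX : Submartingale X ℱ μ) (hX0 : 0 ≤ X)
    (hcont : ∀ ω, Continuous fun t => X t ω) (hT : 0 ≤ T) {c : ℝ} (hc : 0 ≤ c) :
    ENNReal.ofReal c * μ {ω | c < runningSup X T ω} ≤
      ENNReal.ofReal (∫ ω in {ω | c ≤ runningSup X T ω}, X T ω ∂μ) := by
  have hdisc : ∀ k, ENNReal.ofReal c * μ {ω | c ≤ dyadicMax (X · ω) T k} ≤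
      ENNReal.ofReal (∫ ω in {ω | c ≤ runningSup X T ω}, X T ω ∂μ) := fun k => by
    have h := maximal_ineq (hX.sample (monotone_dyadicPoint hT k)) (fun _ => hX0 _)
      (ε := c.toNNReal) (2 ^ k)
    rw [Real.coe_toNNReal _ hc, dyadicPoint_of_two_pow_le T le_rfl] at h
    refine h.trans (ENNReal.ofReal_le_ofReal (setIntegral_mono_set (hX.integrable T).integrableOn
      (ae_of_all _ (hX0 T)) (LE.le.eventuallyLE (ofPred_subset_ofPred.2 fun ω hω =>
        hω.trans (dyadicMax_le_iSup (hcont ω) hT k)))))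
  have hsub : {ω | c < runningSup X T ω} ⊆ ⋃ k, {ω | c ≤ dyadicMax (X · ω) T k} := fun ω hω => by
    rw [mem_ofPred, runningSup_eq_iSup_dyadicMax (hcont ω) hT] at hω
    obtain ⟨k, hk⟩ := exists_lt_of_lt_ciSup hω
    exact mem_iUnion.2 ⟨k, hk.le⟩
  have hmono : Monotone fun k => {ω | c ≤ dyadicMax (X · ω) T k} := fun _ _ h _ hω =>
    le_trans hω (monotone_dyadicMax _ T h)
  calc ENNReal.ofReal c * μ {ω | c < runningSup X T ω}
      ≤ ENNReal.ofReal c * ⨆ k, μ {ω | c ≤ dyadicMax (X · ω) T k} := by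
        rw [← hmono.measure_iUnion]; gcongr
    _ ≤ _ := by rw [ENNReal.mul_iSup]; exact iSup_le hdisc

end ContinuousMartingale

theorem harremoes_inequality_general
    {Ω : Type*} {m0 : MeasurableSpace Ω} {μ : Measure Ω} [IsProbabilityMeasure μ]
    (ℱ : Filtration ℝ m0) (L : ℝ → Ω → ℝ) (T : ℝ) (hT : 0 ≤ T)
    (hmart : Martingale L ℱ μ)
    (hcont : ∀ ω, Continuous fun t => L t ω)
    (hpos : ∀ t ω, 0 < L t ω)
    (h0 : ∀ ω, L 0 ω = 1)
    (S : Ω → ℝ) (hS : ∀ ω, S ω = ⨆ u : Icc (0:ℝ) T, L (u : ℝ) ω)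
    (hent : Integrable (fun ω => L T ω * Real.log (L T ω)) μ) :
    (∫⁻ ω, ENNReal.ofReal (S ω) ∂μ) ≠ ⊤ ∧
    (∫⁻ ω, ENNReal.ofReal (S ω) ∂μ).toReal - 1 -
        Real.log (∫⁻ ω, ENNReal.ofReal (S ω) ∂μ).toReal ≤
      ∫ ω, L T ω * Real.log (L T ω) ∂μ := by
  obtain rfl : S = runningSup L T := funext hS
  have hLm : ∀ t, Measurable (L t) := fun t => (hmart.stronglyAdapted t).measurable.le (ℱ.le t)
  have hL0 : 0 ≤ L := fun t ω => (hpos t ω).le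
  have hL1 : ∫ ω, L T ω ∂μ = 1 := by
    rw [← integral_condExp (ℱ.le 0), integral_congr_ae (hmart.condExp_ae_eq hT)]
    simp [h0]
  exact harremoes_of_maximal_ineq (measurable_runningSup hLm hcont hT)
    (fun ω => h0 ω ▸ le_runningSup (hcont ω) ⟨le_rfl, hT⟩) (hLm T) (hL0 T) (hmart.integrable T) hL1
    hent fun t ht => hmart.submartingale.ofReal_mul_measure_lt_runningSup_le hL0 hcont hT
      (by linarith)

/-- **Harremoës' inequality.** For a positive continuous u.i. martingale `L` with `L 0 = 1`,
with running supremum `S` over `[0,T]` and `x* = E[S]`, one has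
`x* - 1 - log x* ≤ E[L_T log L_T]`; in particular if the entropy `E[L_T log L_T]` is finite
then `E[S] < ∞`. -/
theorem harremoes_inequality
    {Ω : Type*} {m0 : MeasurableSpace Ω} {μ : Measure Ω} [IsProbabilityMeasure μ]
    (ℱ : Filtration ℝ m0) (L : ℝ → Ω → ℝ) (T : ℝ) (hT : 0 ≤ T)
    (hmart : Martingale L ℱ μ)
    (hcont : ∀ ω, Continuous fun t => L t ω)
    (hpos : ∀ t ω, 0 < L t ω)
    (h0 : ∀ ω, L 0 ω = 1)
    (hui : ∀ t, t ≤ T → L t =ᵐ[μ] μ[L T | ℱ t])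
    (S : Ω → ℝ) (hS : ∀ ω, S ω = ⨆ u : Icc (0:ℝ) T, L (u : ℝ) ω)
    (hent : Integrable (fun ω => L T ω * Real.log (L T ω)) μ) :
    (∫⁻ ω, ENNReal.ofReal (S ω) ∂μ) ≠ ⊤ ∧
    (∫⁻ ω, ENNReal.ofReal (S ω) ∂μ).toReal - 1 -
        Real.log (∫⁻ ω, ENNReal.ofReal (S ω) ∂μ).toReal ≤
      ∫ ω, L T ω * Real.log (L T ω) ∂μ :=
  harremoes_inequality_general ℱ L T hT hmart hcont hpos h0 S hS hent
end

section
/- Let ξ be F_T-measurable with E[e^ξ] < ∞ and let ρ_t(ξ) = ln E[e^ξ | F_t]. Then ρ_.(ξ) is the smallest process of the form X_t = X_0 + N_t - (1/2)⟨N⟩_t (with N a continuous local martingale) satisfying X_T = ξ: for any such X with X_T = ξ and e^X of class (D) or merely e^X a local martingale, we have ρ_t(ξ) ≤ X_t a.s. for all t. -/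
/-!
`exp X` is a nonnegative local martingale, hence a supermartingale: along a localizing
sequence the stopped processes are martingales, and the conditional Fatou lemma passes the
martingale identity to the limit as an inequality. Thus
`E[exp ξ | F_t] = E[exp X_T | F_t] ≤ exp X_t`, and taking logarithms is legitimate because the
conditional expectation of the positive variable `exp ξ` is a.s. positive.
-/

open MeasureTheory Filter Set
open scoped Topology ENNReal

/-- A process is a local martingale if there is a localizing sequence of stopping times
tending to infinity such that every stopped process is a martingale. -/
def IsLocalMartingale {Ω : Type*} {m0 : MeasurableSpace Ω} (ℱ : Filtration ℝ m0)
    (μ : Measure Ω) (M : ℝ → Ω → ℝ) : Prop :=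
  ∃ τ : ℕ → Ω → ℝ,
    (∀ n, IsStoppingTime ℱ (fun ω => (τ n ω : WithTop ℝ))) ∧
    (∀ ω, Monotone fun n => τ n ω) ∧
    (∀ ω, Tendsto (fun n => τ n ω) atTop atTop) ∧
    ∀ n, Martingale (MeasureTheory.stoppedProcess M (fun ω => (τ n ω : WithTop ℝ))) ℱ μ

/-- `QV` is the quadratic variation of `M`. -/
def IsQuadraticVariationOf {Ω : Type*} {m0 : MeasurableSpace Ω} (ℱ : Filtration ℝ m0)
    (μ : Measure Ω) (M QV : ℝ → Ω → ℝ) : Prop :=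
  (∀ ω, Monotone fun t => QV t ω) ∧ (∀ ω, Continuous fun t => QV t ω) ∧
    (∀ ω, QV 0 ω = 0) ∧ IsLocalMartingale ℱ μ (fun t ω => M t ω ^ 2 - QV t ω)

theorem abs_sub_min_le_abs_of_nonneg {α : Type*} [AddCommGroup α] [LinearOrder α]
    [IsOrderedAddMonoid α] {a b : α} (ha : 0 ≤ a) : |b - min a b| ≤ |b| := by
  rcases le_total a b with h | h
  · rw [min_eq_left h, abs_of_nonneg (sub_nonneg.2 h)]
    exact (sub_le_self _ ha).trans (le_abs_self _)
  · simp [min_eq_right h]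

namespace MeasureTheory

variable {Ω : Type*} {m m0 : MeasurableSpace Ω} {μ : Measure Ω}

theorem ae_nonpos_of_tendsto_of_le_of_tendsto_integral {Z d : ℕ → Ω → ℝ} {Z' : Ω → ℝ}
    (hZ : ∀ᵐ ω ∂μ, Tendsto (fun n => Z n ω) atTop (𝓝 (Z' ω)))
    (hZd : ∀ n, Z n ≤ᵐ[μ] d n) (hd_nonneg : ∀ n, 0 ≤ᵐ[μ] d n)
    (hd_meas : ∀ n, Measurable (d n)) (hd_int : ∀ n, Integrable (d n) μ)
    (hd_lim : Tendsto (fun n => ∫ ω, d n ω ∂μ) atTop (𝓝 0)) :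
    Z' ≤ᵐ[μ] 0 := by
  set D : Ω → ℝ≥0∞ := fun ω => liminf (fun n => ENNReal.ofReal (d n ω)) atTop
  have hD_lintegral : ∫⁻ ω, D ω ∂μ = 0 := by
    have hlim : Tendsto (fun n => ∫⁻ ω, ENNReal.ofReal (d n ω) ∂μ) atTop (𝓝 0) := by
      simpa [← ofReal_integral_eq_lintegral_ofReal (hd_int _) (hd_nonneg _)]
        using ENNReal.tendsto_ofReal hd_lim
    refine le_antisymm ?_ bot_le
    calc ∫⁻ ω, D ω ∂μ ≤ liminf (fun n => ∫⁻ ω, ENNReal.ofReal (d n ω) ∂μ) atTop :=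
          lintegral_liminf_le' fun n => (hd_meas n).ennreal_ofReal.aemeasurable
      _ = 0 := hlim.liminf_eq
  have hD : D =ᵐ[μ] 0 :=
    (lintegral_eq_zero_iff (Measurable.liminf fun n => (hd_meas n).ennreal_ofReal)).1
      hD_lintegral
  filter_upwards [hZ, ae_all_iff.2 hZd, hD] with ω hZω hZdω hDω
  have : ENNReal.ofReal (Z' ω) ≤ D ω := by
    rw [← (ENNReal.tendsto_ofReal hZω).liminf_eq]
    exact liminf_le_liminf (Eventually.of_forall fun n => ENNReal.ofReal_le_ofReal (hZdω n))
  simpa [hDω] using this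

theorem condExp_pos_of_ae_pos (hm : m ≤ m0) [SigmaFinite (μ.trim hm)] {f : Ω → ℝ}
    (hf : Integrable f μ) (hpos : ∀ᵐ ω ∂μ, 0 < f ω) :
    ∀ᵐ ω ∂μ, 0 < μ[f|m] ω := by
  set A := {ω | μ[f|m] ω ≤ 0}
  have hA : MeasurableSet[m] A :=
    measurableSet_le stronglyMeasurable_condExp.measurable measurable_const
  have hf_nonneg : 0 ≤ᵐ[μ.restrict A] f := ae_restrict_of_ae (hpos.mono fun _ h => h.le)
  have hintegral : ∫ ω in A, f ω ∂μ = 0 := by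
    refine le_antisymm ?_ (integral_nonneg_of_ae hf_nonneg)
    rw [← setIntegral_condExp hm hf hA]
    exact setIntegral_nonpos (hm _ hA) fun _ hω => hω
  have hf_zero : f =ᵐ[μ.restrict A] 0 :=
    (setIntegral_eq_zero_iff_of_nonneg_ae hf_nonneg hf.integrableOn).1 hintegral
  have hA_null : μ A = 0 := by
    have : ∀ᵐ ω ∂μ.restrict A, False := by
      filter_upwards [hf_zero, ae_restrict_of_ae hpos] with ω h0 hpos
      exact (ne_of_gt hpos) h0
    simpa [ae_iff] using this
  filter_upwards [measure_eq_zero_iff_ae_notMem.1 hA_null] with ω hω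
  simpa [A] using hω

/-- **Conditional Fatou lemma**. -/
theorem condExp_le_of_tendsto_of_nonneg (hm : m ≤ m0) [SigmaFinite (μ.trim hm)]
    {g Y : ℕ → Ω → ℝ} {f Y' : Ω → ℝ}
    (hg_nonneg : ∀ n, 0 ≤ᵐ[μ] g n) (hg_int : ∀ n, Integrable (g n) μ) (hf : Integrable f μ)
    (hgf : ∀ᵐ ω ∂μ, Tendsto (fun n => g n ω) atTop (𝓝 (f ω)))
    (hgY : ∀ n, μ[g n|m] ≤ᵐ[μ] Y n) (hY : ∀ᵐ ω ∂μ, Tendsto (fun n => Y n ω) atTop (𝓝 (Y' ω))) :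
    μ[f|m] ≤ᵐ[μ] Y' := by
  -- `min (g n) f` is dominated by `|f|` and still converges to `f`.
  set H : ℕ → Ω → ℝ := fun n ω => min (g n ω) (f ω)
  have hH_int : ∀ n, Integrable (H n) μ := fun n => (hg_int n).inf hf
  have hH_lim : Tendsto (fun n => ∫ ω, (f - H n) ω ∂μ) atTop (𝓝 0) := by
    have := tendsto_integral_of_dominated_convergence (fun ω => |f ω|)
      (fun n => (hf.sub (hH_int n)).aestronglyMeasurable) hf.abs
      (fun n => (hg_nonneg n).mono fun ω hω => abs_sub_min_le_abs_of_nonneg hω)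
      (hgf.mono fun ω hω => by
        simpa [H] using (tendsto_const_nhds (x := f ω)).sub (hω.min tendsto_const_nhds))
    simpa using this
  have hZ : ∀ᵐ ω ∂μ, Tendsto (fun n => (μ[f|m] - Y n) ω) atTop (𝓝 ((μ[f|m] - Y') ω)) :=
    hY.mono fun ω hω => tendsto_const_nhds.sub hω
  have hZd : ∀ n, μ[f|m] - Y n ≤ᵐ[μ] μ[f - H n|m] := fun n => by
    have hHg : μ[H n|m] ≤ᵐ[μ] μ[g n|m] :=
      condExp_mono (hH_int n) (hg_int n) (ae_of_all _ fun _ => min_le_left _ _)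
    filter_upwards [condExp_sub hf (hH_int n) m, hHg, hgY n] with ω hsub hHg hgY
    rw [hsub, Pi.sub_apply, Pi.sub_apply]
    linarith
  have := ae_nonpos_of_tendsto_of_le_of_tendsto_integral hZ hZd
    (fun n => condExp_nonneg (ae_of_all _ fun ω => sub_nonneg.2 (min_le_right _ _)))
    (fun n => (stronglyMeasurable_condExp.mono hm).measurable) (fun _ => integrable_condExp)
    (by simpa only [integral_condExp hm] using hH_lim)
  exact this.mono fun ω hω => sub_nonpos.1 hω

end MeasureTheory

section LocalMartingale

variable {Ω : Type*} {m0 : MeasurableSpace Ω} {ℱ : Filtration ℝ m0} {μ : Measure Ω}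

theorem tendsto_stoppedProcess_of_tendsto_atTop {M : ℝ → Ω → ℝ} {τ : ℕ → Ω → ℝ} {ω : Ω}
    (hτ : Tendsto (fun n => τ n ω) atTop atTop) (t : ℝ) :
    Tendsto (fun n => stoppedProcess M (fun ω => (τ n ω : WithTop ℝ)) t ω) atTop (𝓝 (M t ω)) :=
  tendsto_const_nhds.congr' <| (hτ.eventually_ge_atTop t).mono fun _ hn =>
    (stoppedProcess_eq_of_le (u := M) (τ := fun ω => (τ _ ω : WithTop ℝ))
      (WithTop.coe_le_coe.2 hn)).symm

theorem IsLocalMartingale.condExp_le_of_nonneg [SigmaFiniteFiltration μ ℱ] {M : ℝ → Ω → ℝ}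
    (hM : IsLocalMartingale ℱ μ M) (hM_nonneg : ∀ t ω, 0 ≤ M t ω) {s t : ℝ} (hst : s ≤ t)
    (hM_int : Integrable (M t) μ) :
    μ[M t|ℱ s] ≤ᵐ[μ] M s := by
  obtain ⟨τ, -, -, hτ, hmart⟩ := hM
  exact condExp_le_of_tendsto_of_nonneg (ℱ.le s)
    (fun _ => ae_of_all _ fun ω => hM_nonneg _ ω) (fun n => (hmart n).integrable t) hM_int
    (ae_of_all _ fun ω => tendsto_stoppedProcess_of_tendsto_atTop (hτ ω) t)
    (fun n => ((hmart n).condExp_ae_eq hst).le)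
    (ae_of_all _ fun ω => tendsto_stoppedProcess_of_tendsto_atTop (hτ ω) s)

end LocalMartingale

theorem entropic_process_minimal_general
    {Ω : Type*} {m0 : MeasurableSpace Ω} {μ : Measure Ω} [IsProbabilityMeasure μ]
    (ℱ : Filtration ℝ m0) (T : ℝ) (ξ : Ω → ℝ)
    (hint : Integrable (fun ω => Real.exp (ξ ω)) μ)
    (X : ℝ → Ω → ℝ)
    (hXT : (fun ω => X T ω) =ᵐ[μ] ξ)
    (hexp : IsLocalMartingale ℱ μ (fun t ω => Real.exp (X t ω))) :
    ∀ t, t ≤ T →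
      (fun ω => Real.log ((μ[fun ω' => Real.exp (ξ ω') | ℱ t]) ω)) ≤ᵐ[μ] X t := by
  intro t ht
  have hexpT : (fun ω => Real.exp (X T ω)) =ᵐ[μ] fun ω => Real.exp (ξ ω) :=
    hXT.mono fun ω hω => congrArg Real.exp hω
  have hsuper := hexp.condExp_le_of_nonneg (fun _ _ => (Real.exp_pos _).le) ht
    (hint.congr hexpT.symm)
  have hpos := condExp_pos_of_ae_pos (ℱ.le t) hint (ae_of_all _ fun ω => Real.exp_pos (ξ ω))
  filter_upwards [hsuper, condExp_congr_ae (m := ℱ t) hexpT, hpos] with ω hle heq hpos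
  exact (Real.log_le_iff_le_exp hpos).2 (heq ▸ hle)

/-- **Minimality of the entropic process.** If `ξ ∈ L¹_exp` and
`X = X₀ + N - (1/2)⟨N⟩` is a `q`-semimartingale with `X_T = ξ` and `exp X` a local
martingale, then `ρ_t(ξ) = log E[exp ξ | F_t] ≤ X_t` a.s. for every `t ≤ T`. -/
theorem entropic_process_minimal
    {Ω : Type*} {m0 : MeasurableSpace Ω} {μ : Measure Ω} [IsProbabilityMeasure μ]
    (ℱ : Filtration ℝ m0) (T : ℝ) (hT : 0 ≤ T) (ξ : Ω → ℝ)
    (hint : Integrable (fun ω => Real.exp (ξ ω)) μ)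
    (X N QV : ℝ → Ω → ℝ)
    (hN : IsLocalMartingale ℱ μ N) (hNc : ∀ ω, Continuous fun t => N t ω)
    (hN0 : ∀ ω, N 0 ω = 0)
    (hQV : IsQuadraticVariationOf ℱ μ N QV)
    (hX : ∀ t ω, X t ω = X 0 ω + N t ω - QV t ω / 2)
    (hXT : (fun ω => X T ω) =ᵐ[μ] ξ)
    (hexp : IsLocalMartingale ℱ μ (fun t ω => Real.exp (X t ω))) :
    ∀ t, t ≤ T →
      (fun ω => Real.log ((μ[fun ω' => Real.exp (ξ ω') | ℱ t]) ω)) ≤ᵐ[μ] X t :=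
  entropic_process_minimal_general ℱ T ξ hint X hXT hexp
end
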